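/- Let Λ be a Z-characteristic map over wed_v(K). Then Λ is D-J equivalent to a standard form: a matrix whose v₂-column is the last standard basis vector e_{n+1}, whose v₁-column is (a_v, −1)ᵀ with a_v the v-column of λ₁ := proj_{v₂}Λ, whose other columns are (a_i, e_i)ᵀ for integers e_i, where λ₁ = (a₁ … aₘ). Moreover, if all e_i = 0 then proj_{v₁}Λ = proj_{v₂}Λ (Λ is the canonical extension of λ₁). -/

import Mathlib

def IsComplex {V : Type*} (K : Set (Finset V)) : Prop :=
  ∀ s ∈ K, ∀ t, t ⊆ s → t ∈ K

def IsFacet {V : Type*} (K : Set (Finset V)) (s : Finset V) : Prop :=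
  s ∈ K ∧ ∀ t ∈ K, s ⊆ t → t = s

/-- The simplicial wedge `wed_v K = (I ⋆ link_K {v}) ∪ (∂I ⋆ (K ∖ {v}))` on the vertex set
`V ⊕ Unit`, the two new vertices being `v₁ = Sum.inl v` and `v₂ = Sum.inr ()`. -/
def wed {V : Type*} [DecidableEq V] (K : Set (Finset V)) (v : V) :
    Set (Finset (V ⊕ Unit)) :=
  {s | ∃ a : Finset (V ⊕ Unit), a ⊆ ({Sum.inl v, Sum.inr ()} : Finset (V ⊕ Unit)) ∧
    ∃ τ : Finset V, v ∉ τ ∧ τ ∈ K ∧ s = a ∪ τ.image Sum.inl ∧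
      (insert v τ ∈ K ∨ a.card ≤ 1)}

/-- A `ℤ`-characteristic map over `K` with values in the `ℤ`-module `M`: the vectors of every
facet form a `ℤ`-basis of `M`. -/
def IsZCharMap {V : Type*} (K : Set (Finset V)) {M : Type*} [AddCommGroup M] [Module ℤ M]
    (lam : V → M) : Prop :=
  ∀ s, IsFacet K s → ∃ b : Module.Basis {x : V // x ∈ s} ℤ M, ∀ i : {x : V // x ∈ s}, b i = lam i.val

section Helpers

open Submodule

variable {ι : Type*} [DecidableEq ι]

lemma resMap_surj (i₀ : ι) :
    Function.Surjective (LinearMap.funLeft ℤ ℤ (Subtype.val : {i : ι // i ≠ i₀} → ι)) := by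
  intro y
  refine ⟨fun i => if h : i = i₀ then 0 else y ⟨i, h⟩, ?_⟩
  funext j
  simp [LinearMap.funLeft_apply, j.prop]

lemma resMap_ker (i₀ : ι) :
    LinearMap.ker (LinearMap.funLeft ℤ ℤ (Subtype.val : {i : ι // i ≠ i₀} → ι)) =
      span ℤ {Pi.single i₀ 1} := by
  ext x
  simp only [LinearMap.mem_ker, mem_span_singleton]
  constructor
  · intro h
    refine ⟨x i₀, ?_⟩
    funext i
    by_cases hi : i = i₀
    · subst hi; simp
    · have := congrFun h ⟨i, hi⟩
      simp only [LinearMap.funLeft_apply, Pi.zero_apply] at this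
      simp [Pi.single_apply, hi, this]
  · rintro ⟨c, rfl⟩
    funext i
    simp [LinearMap.funLeft_apply, Pi.single_apply, i.prop]

/-- The quotient of `ι → ℤ` by the span of a standard basis vector is identified with the
functions on the complement of that index. -/
noncomputable def quotExt (i₀ : ι) :
    ((ι → ℤ) ⧸ span ℤ {(Pi.single i₀ 1 : ι → ℤ)}) ≃ₗ[ℤ] ({i : ι // i ≠ i₀} → ℤ) :=
  (Submodule.quotEquivOfEq _ _ (resMap_ker i₀).symm).trans
    (LinearMap.quotKerEquivOfSurjective _ (resMap_surj i₀))

lemma quotExt_mk (i₀ : ι) (x : ι → ℤ) :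
    quotExt i₀ (Submodule.Quotient.mk x) = fun i => x i.val := rfl

lemma equivFun_basis {M : Type*} [Fintype ι] [AddCommGroup M] [Module ℤ M]
    (b : Module.Basis ι ℤ M) (i : ι) :
    b.equivFun (b i) = Pi.single i 1 := by
  funext j
  rw [b.equivFun_self]
  simp [Pi.single_apply, eq_comm]

variable {n : ℕ}

/-- `Fin n` is equivalent to the complement of `Fin.last n`. -/
def lastCompl : Fin n ≃ {i : Fin (n+1) // i ≠ Fin.last n} where
  toFun i := ⟨i.castSucc, (Fin.castSucc_lt_last i).ne⟩
  invFun j := j.val.castPred j.prop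
  left_inv i := by simp
  right_inv j := by simp

lemma single_last_eq_snoc : (Pi.single (Fin.last n) 1 : Fin (n+1) → ℤ) =
    Fin.snoc (0 : Fin n → ℤ) (1 : ℤ) := by
  funext i
  induction i using Fin.lastCases with
  | last => simp
  | cast i => simp [Pi.single_apply, (Fin.castSucc_lt_last i).ne]

lemma snoc_self (y : Fin (n+1) → ℤ) :
    y = Fin.snoc (fun i => y i.castSucc) (y (Fin.last n)) := (Fin.snoc_init_self y).symm

/-- The transvection sending `e_{j₀} ↦ e_{j₀} - e_last` and fixing the other basis vectors. -/
def Tmap (j₀ : Fin (n+1)) (h : j₀ ≠ Fin.last n) :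
    (Fin (n+1) → ℤ) ≃ₗ[ℤ] (Fin (n+1) → ℤ) :=
  LinearEquiv.ofLinear
    (LinearMap.id - LinearMap.smulRight (LinearMap.proj j₀) (Pi.single (Fin.last n) 1))
    (LinearMap.id + LinearMap.smulRight (LinearMap.proj j₀) (Pi.single (Fin.last n) 1))
    (by
      refine LinearMap.ext fun x => ?_
      have hj : (Pi.single (Fin.last n) 1 : Fin (n+1) → ℤ) j₀ = 0 := by
        simp [Pi.single_apply, h]
      simp only [LinearMap.comp_apply, LinearMap.add_apply, LinearMap.sub_apply,
        LinearMap.id_apply, LinearMap.smulRight_apply, LinearMap.proj_apply,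
        Pi.add_apply, Pi.sub_apply, Pi.smul_apply, smul_eq_mul, hj, mul_zero, add_zero,
        sub_zero]
      abel)
    (by
      refine LinearMap.ext fun x => ?_
      have hj : (Pi.single (Fin.last n) 1 : Fin (n+1) → ℤ) j₀ = 0 := by
        simp [Pi.single_apply, h]
      simp only [LinearMap.comp_apply, LinearMap.add_apply, LinearMap.sub_apply,
        LinearMap.id_apply, LinearMap.smulRight_apply, LinearMap.proj_apply,
        Pi.add_apply, Pi.sub_apply, Pi.smul_apply, smul_eq_mul, hj, mul_zero, add_zero,
        sub_zero]
      abel)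

lemma Tmap_apply (j₀ : Fin (n+1)) (h : j₀ ≠ Fin.last n) (x : Fin (n+1) → ℤ) :
    Tmap j₀ h x = x - x j₀ • Pi.single (Fin.last n) 1 := rfl

lemma exists_facet {V : Type*} [Fintype V] {K : Set (Finset V)} {s : Finset V} (hs : s ∈ K) :
    ∃ t, IsFacet K t ∧ s ⊆ t := by
  have hfin : {u | u ∈ K ∧ s ⊆ u}.Finite := Set.toFinite _
  obtain ⟨t, ⟨htK, hst⟩, hmax⟩ :=
    Set.Finite.exists_maximalFor Finset.card _ hfin ⟨s, hs, Finset.Subset.refl s⟩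
  refine ⟨t, ⟨htK, fun u hu htu => ?_⟩, hst⟩
  have := hmax ⟨hu, hst.trans htu⟩ (Finset.card_le_card htu)
  exact (Finset.eq_of_subset_of_card_le htu this.ge).symm

lemma wed_facet {V : Type*} [DecidableEq V] {K : Set (Finset V)} (hK : IsComplex K) (v : V)
    {t : Finset V} (ht : IsFacet K t) :
    IsFacet (wed K v) (insert (Sum.inr ()) (t.image Sum.inl)) := by
  classical
  constructor
  · by_cases hvt : v ∈ t
    · refine ⟨{Sum.inl v, Sum.inr ()}, Finset.Subset.refl _, t.erase v,
        Finset.notMem_erase _ _, hK t ht.1 _ (Finset.erase_subset _ _), ?_, Or.inl ?_⟩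
      · ext x
        simp only [Finset.mem_insert, Finset.mem_union, Finset.mem_image,
          Finset.mem_erase, Finset.mem_insert, Finset.mem_singleton]
        constructor
        · rintro (rfl | ⟨w, hw, rfl⟩)
          · exact Or.inl (Or.inr rfl)
          · by_cases hwv : w = v
            · subst hwv; exact Or.inl (Or.inl rfl)
            · exact Or.inr ⟨w, ⟨hwv, hw⟩, rfl⟩
        · rintro ((rfl | rfl) | ⟨w, ⟨hwv, hw⟩, rfl⟩)
          · exact Or.inr ⟨v, hvt, rfl⟩
          · exact Or.inl rfl
          · exact Or.inr ⟨w, hw, rfl⟩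
      · rw [Finset.insert_erase hvt]; exact ht.1
    · refine ⟨{Sum.inr ()}, ?_, t, hvt, ht.1, ?_, Or.inr ?_⟩
      · intro x hx
        simp only [Finset.mem_singleton] at hx
        simp [hx]
      · rw [← Finset.insert_eq]
      · simp
  · rintro u ⟨a', ha', τ', hvτ', hτ'K, rfl, hdisj⟩ hsub
    have hinr : Sum.inr () ∈ a' := by
      have := hsub (Finset.mem_insert_self _ _)
      rcases Finset.mem_union.1 this with h | h
      · exact h
      · simp at h
    have htτ : ∀ w ∈ t, w = v ∨ w ∈ τ' := by
      intro w hw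
      have : Sum.inl w ∈ a' ∪ τ'.image Sum.inl :=
        hsub (Finset.mem_insert_of_mem (Finset.mem_image_of_mem _ hw))
      rcases Finset.mem_union.1 this with h | h
      · rcases Finset.mem_insert.1 (ha' h) with h1 | h1
        · exact Or.inl (Sum.inl.inj h1)
        · simp at h1
      · obtain ⟨w', hw', hww⟩ := Finset.mem_image.1 h
        exact Or.inr (Sum.inl.inj hww ▸ hw')
    by_cases hvt : v ∈ t
    · have hinlv : Sum.inl v ∈ a' := by
        have : Sum.inl v ∈ a' ∪ τ'.image Sum.inl :=
          hsub (Finset.mem_insert_of_mem (Finset.mem_image_of_mem _ hvt))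
        rcases Finset.mem_union.1 this with h | h
        · exact h
        · obtain ⟨w', hw', hww⟩ := Finset.mem_image.1 h
          rw [Sum.inl.inj hww] at hw'
          exact absurd hw' hvτ'
      have ha'eq : a' = {Sum.inl v, Sum.inr ()} := by
        apply Finset.Subset.antisymm ha'
        intro x hx
        rcases Finset.mem_insert.1 hx with rfl | hx
        · exact hinlv
        · simp only [Finset.mem_singleton] at hx; subst hx; exact hinr
      have hcard : ¬ a'.card ≤ 1 := by
        rw [ha'eq]
        simp
      have hins : insert v τ' ∈ K := hdisj.resolve_right hcard
      have htsub : t ⊆ insert v τ' := by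
        intro w hw
        rcases htτ w hw with rfl | h
        · exact Finset.mem_insert_self _ _
        · exact Finset.mem_insert_of_mem h
      have hteq : insert v τ' = t := ht.2 _ hins htsub
      have hτ'eq : τ' = t.erase v := by
        ext w
        simp only [Finset.mem_erase]
        constructor
        · intro hw
          exact ⟨fun h => hvτ' (h ▸ hw), hteq ▸ Finset.mem_insert_of_mem hw⟩
        · rintro ⟨hwv, hw⟩
          rcases Finset.mem_insert.1 (hteq ▸ hw : w ∈ insert v τ') with rfl | h
          · exact absurd rfl hwv
          · exact h
      rw [ha'eq, hτ'eq]
      ext x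
      simp only [Finset.mem_union, Finset.mem_insert, Finset.mem_singleton, Finset.mem_image,
        Finset.mem_erase]
      constructor
      · rintro ((rfl | rfl) | ⟨w, ⟨hwv, hw⟩, rfl⟩)
        · exact Or.inr ⟨v, hvt, rfl⟩
        · exact Or.inl rfl
        · exact Or.inr ⟨w, hw, rfl⟩
      · rintro (rfl | ⟨w, hw, rfl⟩)
        · exact Or.inl (Or.inr rfl)
        · by_cases hwv : w = v
          · subst hwv; exact Or.inl (Or.inl rfl)
          · exact Or.inr ⟨w, ⟨hwv, hw⟩, rfl⟩
    · have htsub : t ⊆ τ' := by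
        intro w hw
        rcases htτ w hw with rfl | h
        · exact absurd hw hvt
        · exact h
      have hτ'eq : τ' = t := ht.2 _ hτ'K htsub
      subst hτ'eq
      have hnotinlv : Sum.inl v ∉ a' := by
        intro hinlv
        have hcard : ¬ a'.card ≤ 1 := by
          intro hle
          have h2 : ({Sum.inl v, Sum.inr ()} : Finset (V ⊕ Unit)).card ≤ a'.card :=
            Finset.card_le_card (by
              intro x hx
              rcases Finset.mem_insert.1 hx with rfl | hx
              · exact hinlv
              · simp only [Finset.mem_singleton] at hx; subst hx; exact hinr)
          simp at h2
          omega
        have hins : insert v τ' ∈ K := hdisj.resolve_right hcard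
        have := ht.2 _ hins (Finset.subset_insert _ _)
        exact hvt (this ▸ Finset.mem_insert_self v τ')
      have ha'eq : a' = {Sum.inr ()} := by
        apply Finset.Subset.antisymm
        · intro x hx
          rcases Finset.mem_insert.1 (ha' hx) with rfl | h
          · exact absurd hx hnotinlv
          · exact h
        · intro x hx
          simp only [Finset.mem_singleton] at hx; subst hx; exact hinr
      rw [ha'eq, ← Finset.insert_eq]

end Helpers

set_option maxHeartbeats 2000000 in
open Submodule in
/-- Standard form: every `ℤ`-characteristic map `Λ` over `wed_v K` is D-J equivalent (via
some `A ∈ GL(n+1, ℤ)`) to a matrix whose `v₂`-column is `e_{n+1} = (0, 1)ᵀ`, whose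
`v₁`-column is `(a_v, -1)ᵀ`, and whose column at each vertex `w ≠ v` is `(a_w, e_w)ᵀ`, where
`a = (a₁ … a_m)` is a characteristic matrix over `K` representing `λ₁ = proj_{v₂} Λ`.
Moreover, if all `e_w = 0`, then `proj_{v₁} Λ = proj_{v₂} Λ` (`Λ` is the canonical extension
of `λ₁`). -/
theorem stmt_14 {V : Type*} [Fintype V] [DecidableEq V] (n : ℕ) (K : Set (Finset V))
    (hK : IsComplex K) (v : V) (hv : ({v} : Finset V) ∈ K)
    (Λ : V ⊕ Unit → Fin (n + 1) → ℤ)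
    (hchar : IsZCharMap (wed K v) Λ) :
    ∃ (A : (Fin (n + 1) → ℤ) ≃ₗ[ℤ] (Fin (n + 1) → ℤ)) (a : V → Fin n → ℤ) (erow : V → ℤ),
      A (Λ (Sum.inr ())) = Fin.snoc (0 : Fin n → ℤ) (1 : ℤ) ∧
      A (Λ (Sum.inl v)) = Fin.snoc (a v) (-1 : ℤ) ∧
      (∀ w : V, w ≠ v → A (Λ (Sum.inl w)) = Fin.snoc (a w) (erow w)) ∧
      IsZCharMap K a ∧
      (∃ e : ((Fin (n + 1) → ℤ) ⧸ Submodule.span ℤ {Λ (Sum.inr ())}) ≃ₗ[ℤ] (Fin n → ℤ),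
        ∀ w : V, e (Submodule.Quotient.mk (Λ (Sum.inl w))) = a w) ∧
      ((∀ w : V, w ≠ v → erow w = 0) →
        ∃ g : ((Fin (n + 1) → ℤ) ⧸ Submodule.span ℤ {Λ (Sum.inl v)}) ≃ₗ[ℤ]
            ((Fin (n + 1) → ℤ) ⧸ Submodule.span ℤ {Λ (Sum.inr ())}),
          ∀ w : V,
            g (Submodule.Quotient.mk (if w = v then Λ (Sum.inr ()) else Λ (Sum.inl w))) =
              Submodule.Quotient.mk (Λ (Sum.inl w))) := by
  classical
  obtain ⟨t₀, ht₀, hvs₀⟩ := exists_facet hv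
  have hvt₀ : v ∈ t₀ := hvs₀ (Finset.mem_singleton_self v)
  set s₀ : Finset (V ⊕ Unit) := insert (Sum.inr ()) (t₀.image Sum.inl) with hs₀def
  have hs₀ : IsFacet (wed K v) s₀ := wed_facet hK v ht₀
  obtain ⟨b₀, hb₀⟩ := hchar s₀ hs₀
  have hcard : Fintype.card {x : V ⊕ Unit // x ∈ s₀} = n + 1 := by
    have h1 := Module.finrank_eq_card_basis b₀
    have h2 : Module.finrank ℤ (Fin (n+1) → ℤ) = n + 1 := by simp
    exact h1.symm.trans h2
  set i₂ : {x : V ⊕ Unit // x ∈ s₀} := ⟨Sum.inr (), Finset.mem_insert_self _ _⟩ with hi₂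
  set i₁ : {x : V ⊕ Unit // x ∈ s₀} :=
    ⟨Sum.inl v, Finset.mem_insert_of_mem (Finset.mem_image_of_mem _ hvt₀)⟩ with hi₁
  have hi12 : i₁ ≠ i₂ := by simp [hi₁, hi₂, Subtype.ext_iff]
  set σ0 := Fintype.equivFinOfCardEq hcard with hσ0
  set σ := σ0.trans (Equiv.swap (σ0 i₂) (Fin.last n)) with hσ
  have hσ₂ : σ i₂ = Fin.last n := by simp [hσ, Equiv.swap_apply_left]
  set j₀ := σ i₁ with hj₀def
  have hj₀ : j₀ ≠ Fin.last n := by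
    rw [← hσ₂]
    intro h
    exact hi12 (σ.injective h)
  set A := (b₀.equivFun.trans (LinearEquiv.funCongrLeft ℤ ℤ σ.symm)).trans (Tmap j₀ hj₀) with hA
  have hA_single : ∀ i : {x : V ⊕ Unit // x ∈ s₀},
      A (Λ i.val) = Tmap j₀ hj₀ (Pi.single (σ i) 1) := by
    intro i
    have h1 : b₀.equivFun (Λ i.val) = Pi.single i 1 := by
      rw [← hb₀ i]; exact equivFun_basis b₀ i
    have h2 : (LinearEquiv.funCongrLeft ℤ ℤ σ.symm) (Pi.single i 1 : _ → ℤ) =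
        Pi.single (σ i) 1 := by
      funext j
      have : ((LinearEquiv.funCongrLeft ℤ ℤ σ.symm) (Pi.single i 1 : _ → ℤ)) j =
          (Pi.single i 1 : _ → ℤ) (σ.symm j) := rfl
      rw [this]
      by_cases hj : j = σ i
      · subst hj
        rw [Equiv.symm_apply_apply]
        simp
      · rw [Pi.single_apply, Pi.single_apply, if_neg hj, if_neg]
        intro h
        exact hj (by rw [← h, Equiv.apply_symm_apply])
    calc A (Λ i.val)
        = Tmap j₀ hj₀ ((LinearEquiv.funCongrLeft ℤ ℤ σ.symm) (b₀.equivFun (Λ i.val))) := rfl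
      _ = Tmap j₀ hj₀ (Pi.single (σ i) 1) := by rw [h1, h2]
  have hA0' : A (Λ (Sum.inr ())) = Pi.single (Fin.last n) 1 := by
    have h := hA_single i₂
    rw [hσ₂] at h
    rw [show Λ (Sum.inr ()) = Λ i₂.val from rfl, h, Tmap_apply]
    simp [Pi.single_apply, hj₀]
  have hA1' : A (Λ (Sum.inl v)) = Pi.single j₀ 1 - Pi.single (Fin.last n) 1 := by
    have h := hA_single i₁
    rw [show Λ (Sum.inl v) = Λ i₁.val from rfl, h, Tmap_apply, ← hj₀def]
    simp
  set aa : V → Fin n → ℤ := fun w i => A (Λ (Sum.inl w)) i.castSucc with haa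
  set er : V → ℤ := fun w => A (Λ (Sum.inl w)) (Fin.last n) with her
  have hlastv : A (Λ (Sum.inl v)) (Fin.last n) = -1 := by
    rw [hA1']
    simp [Pi.single_apply, Ne.symm hj₀]
  have hA0 : A (Λ (Sum.inr ())) = Fin.snoc (0 : Fin n → ℤ) (1 : ℤ) := by
    rw [hA0', single_last_eq_snoc]
  have hA1 : A (Λ (Sum.inl v)) = Fin.snoc (aa v) (-1 : ℤ) := by
    conv_lhs => rw [snoc_self (A (Λ (Sum.inl v)))]
    rw [hlastv]
  have hA2 : ∀ w : V, A (Λ (Sum.inl w)) = Fin.snoc (aa w) (er w) := fun w => snoc_self _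
  -- the quotient equivalence e
  have hmap₂ : (span ℤ {Λ (Sum.inr ())}).map (A : (Fin (n+1) → ℤ) →ₗ[ℤ] (Fin (n+1) → ℤ)) =
      span ℤ {(Pi.single (Fin.last n) 1 : Fin (n+1) → ℤ)} := by
    rw [Submodule.map_span, Set.image_singleton]
    exact congrArg _ (congrArg _ hA0')
  set Qe₂ := Submodule.Quotient.equiv (span ℤ {Λ (Sum.inr ())})
    (span ℤ {(Pi.single (Fin.last n) 1 : Fin (n+1) → ℤ)}) A hmap₂ with hQe₂
  set eFin := (quotExt (Fin.last n)).trans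
    (LinearEquiv.funCongrLeft ℤ ℤ (lastCompl (n := n))) with heFin
  set e := Qe₂.trans eFin with he_def
  have heF : ∀ y : Fin (n+1) → ℤ,
      eFin (Submodule.Quotient.mk y) = fun i => y i.castSucc := fun y => rfl
  have he : ∀ w : V, e (Submodule.Quotient.mk (Λ (Sum.inl w))) = aa w := fun w => rfl
  -- the characteristic map on K
  have hZchar : IsZCharMap K aa := by
    intro t ht
    set st : Finset (V ⊕ Unit) := insert (Sum.inr ()) (t.image Sum.inl) with hstdef
    obtain ⟨bt, hbt⟩ := hchar st (wed_facet hK v ht)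
    set i₀ : {x : V ⊕ Unit // x ∈ st} := ⟨Sum.inr (), Finset.mem_insert_self _ _⟩ with hi₀
    have hmem : ∀ w : {w : V // w ∈ t}, Sum.inl w.val ∈ st :=
      fun w => Finset.mem_insert_of_mem (Finset.mem_image_of_mem _ w.prop)
    have hbij : Function.Bijective (fun w : {w : V // w ∈ t} =>
        (⟨⟨Sum.inl w.val, hmem w⟩, by simp [hi₀, Subtype.ext_iff]⟩ :
          {i : {x : V ⊕ Unit // x ∈ st} // i ≠ i₀})) := by
      constructor
      · intro w w' h
        simp only [Subtype.mk.injEq, Sum.inl.injEq] at h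
        exact Subtype.ext h
      · rintro ⟨⟨x, hx⟩, hne⟩
        rcases Finset.mem_insert.1 hx with rfl | hx'
        · exact absurd (Subtype.ext rfl) hne
        · obtain ⟨w, hw, rfl⟩ := Finset.mem_image.1 hx'
          exact ⟨⟨w, hw⟩, rfl⟩
    set ψ := Equiv.ofBijective _ hbij with hψdef
    have hmapt : (span ℤ {Λ (Sum.inr ())}).map
        (bt.equivFun.symm.symm : (Fin (n+1) → ℤ) →ₗ[ℤ] ({x : V ⊕ Unit // x ∈ st} → ℤ)) =
        span ℤ {(Pi.single i₀ 1 : {x : V ⊕ Unit // x ∈ st} → ℤ)} := by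
      rw [Submodule.map_span, Set.image_singleton]
      congr 1
      rw [Set.singleton_eq_singleton_iff, LinearEquiv.symm_symm, ← hbt i₀]
      exact equivFun_basis bt i₀
    set Et := (e.symm.trans ((Submodule.Quotient.equiv _ _ bt.equivFun.symm.symm hmapt).trans
        (quotExt i₀))).trans (LinearEquiv.funCongrLeft ℤ ℤ ψ) with hEt
    refine ⟨Module.Basis.ofEquivFun Et, fun w => ?_⟩
    have hco := Module.Basis.coe_ofEquivFun Et
    have h1 : (Module.Basis.ofEquivFun Et) w = Et.symm (Pi.single w 1) := by rw [hco]
    rw [h1, LinearEquiv.symm_apply_eq]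
    have h2 : e.symm (aa w.val) = Submodule.Quotient.mk (Λ (Sum.inl w.val)) := by
      rw [LinearEquiv.symm_apply_eq]
      exact (he w.val).symm
    have h3 : Et (aa w.val) =
        fun w' : {w : V // w ∈ t} => bt.equivFun (Λ (Sum.inl w.val)) (ψ w').val := by
      show (LinearEquiv.funCongrLeft ℤ ℤ ψ) ((quotExt i₀)
        ((Submodule.Quotient.equiv _ _ bt.equivFun.symm.symm hmapt) (e.symm (aa w.val)))) = _
      rw [h2]
      rfl
    rw [h3]
    have h4 : bt.equivFun (Λ (Sum.inl w.val)) = Pi.single ⟨Sum.inl w.val, hmem w⟩ 1 := by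
      rw [← hbt ⟨Sum.inl w.val, hmem w⟩]
      exact equivFun_basis bt _
    rw [h4]
    funext w'
    have hψw' : (ψ w').val = ⟨Sum.inl w'.val, hmem w'⟩ := rfl
    rw [hψw', Pi.single_apply, Pi.single_apply]
    simp only [Subtype.mk.injEq, Sum.inl.injEq, Subtype.ext_iff]
  refine ⟨A, aa, er, hA0, hA1, fun w _ => hA2 w, hZchar, ⟨e, he⟩, ?_⟩
  -- the final quotient equivalence g
  intro herow
  obtain ⟨u, hu⟩ : ∃ u : Fin (n+1) → ℤ, Fin.snoc (aa v) (-1 : ℤ) = u := ⟨_, rfl⟩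
  set φ : (Fin (n+1) → ℤ) →ₗ[ℤ] (Fin n → ℤ) :=
    (LinearMap.funLeft ℤ ℤ Fin.castSucc) +
      LinearMap.smulRight (LinearMap.proj (Fin.last n)) (aa v) with hφ
  have hφ_apply : ∀ x : Fin (n+1) → ℤ,
      φ x = (fun i => x i.castSucc) + x (Fin.last n) • aa v := fun x => rfl
  have hφsurj : Function.Surjective φ := by
    intro y
    refine ⟨Fin.snoc y 0, ?_⟩
    rw [hφ_apply]
    funext i
    simp
  have hφker : LinearMap.ker φ = span ℤ {u} := by
    rw [← hu]
    ext x
    simp only [LinearMap.mem_ker, mem_span_singleton]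
    constructor
    · intro h
      refine ⟨-(x (Fin.last n)), ?_⟩
      have heq : ∀ i : Fin n, x i.castSucc + x (Fin.last n) * aa v i = 0 := by
        intro i
        have h5 := congrFun h i
        rw [hφ_apply] at h5
        simpa using h5
      funext j
      induction j using Fin.lastCases with
      | last => simp
      | cast i =>
        have h6 := heq i
        simp only [Pi.smul_apply, Fin.snoc_castSucc, smul_eq_mul]
        linarith [h6]
    · rintro ⟨c, rfl⟩
      rw [map_smul]
      have h7 : φ (Fin.snoc (aa v) (-1 : ℤ)) = 0 := by
        rw [hφ_apply]
        funext i
        simp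
      rw [h7, smul_zero]
  have hmap₁ : (span ℤ {Λ (Sum.inl v)}).map (A : (Fin (n+1) → ℤ) →ₗ[ℤ] (Fin (n+1) → ℤ)) =
      span ℤ {u} := by
    rw [Submodule.map_span, Set.image_singleton]
    exact congrArg _ (congrArg _ (hA1.trans hu))
  set Qe₁ := Submodule.Quotient.equiv (span ℤ {Λ (Sum.inl v)}) (span ℤ {u}) A hmap₁ with hQe₁
  set qφ := (Submodule.quotEquivOfEq _ _ hφker.symm).trans
    (φ.quotKerEquivOfSurjective hφsurj) with hqφ
  refine ⟨((Qe₁.trans qφ).trans eFin.symm).trans Qe₂.symm, fun w => ?_⟩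
  have hg : ∀ x : Fin (n+1) → ℤ,
      (((Qe₁.trans qφ).trans eFin.symm).trans Qe₂.symm) (Submodule.Quotient.mk x) =
        Qe₂.symm (eFin.symm (φ (A x))) := fun x => rfl
  have hQ2 : ∀ y : Fin (n+1) → ℤ,
      Qe₂.symm (Submodule.Quotient.mk (A y)) = Submodule.Quotient.mk y := by
    intro y
    have h8 : Qe₂ (Submodule.Quotient.mk y) = Submodule.Quotient.mk (A y) := rfl
    rw [← h8, LinearEquiv.symm_apply_apply]
  have heFs : ∀ z : V, eFin.symm (aa z) = Submodule.Quotient.mk (A (Λ (Sum.inl z))) := by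
    intro z
    rw [LinearEquiv.symm_apply_eq]
    exact (heF (A (Λ (Sum.inl z)))).symm
  by_cases hwv : w = v
  · subst hwv
    rw [if_pos rfl, hg, hA0']
    have h9 : φ (Pi.single (Fin.last n) 1) = aa w := by
      rw [hφ_apply]
      funext i
      simp [Pi.single_apply, (Fin.castSucc_lt_last i).ne]
    rw [h9, heFs, hQ2]
  · rw [if_neg hwv, hg]
    have h10 : A (Λ (Sum.inl w)) (Fin.last n) = 0 := herow w hwv
    have h11 : φ (A (Λ (Sum.inl w))) = aa w := by
      rw [hφ_apply]
      funext i
      simp [h10]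
      rfl
    rw [h11, heFs, hQ2]
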